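/- Let k ≥ 1, and set λ := (1−k)/2 and μ := (1+k)/2. Let X, a_0, …, a_k : ℝ → ℝ be smooth, and let b_0, …, b_k : ℝ → ℝ be smooth functions such that Σ_{i=0}^{k} b_i·φ^{(i)} = L_X^μ( Σ_{i=0}^{k} a_i·φ^{(i)} ) − Σ_{i=0}^{k} a_i·(L_X^λ φ)^{(i)} for every smooth φ : ℝ → ℝ. Then both (b_k)' = L_X^1( (a_k)' ) and b_{k−1} = L_X^1( a_{k−1} ). (That is, for these special weights the two maps A ↦ a_k'·dx and A ↦ a_{k−1}·dx are two independent equivariant projections onto 1-forms.) -/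

import Mathlib

open Finset

/-- Lie derivative of a `lam`-density `φ` along the vector field `X`:
`L_X^lam φ = X·φ' + lam·X'·φ`. -/
noncomputable def lieDeriv (lam : ℝ) (X φ : ℝ → ℝ) : ℝ → ℝ :=
  fun x => X x * deriv φ x + lam * deriv X x * φ x


lemma contDiff_inf_of_top {f : ℝ → ℝ} (h : ContDiff ℝ (⊤ : ℕ∞) f) : ContDiff ℝ (⊤:ℕ∞) f :=
  h.of_le (by simp)

lemma smooth_iter {f : ℝ → ℝ} (h : ContDiff ℝ (⊤:ℕ∞) f) (n : ℕ) :
    ContDiff ℝ (⊤:ℕ∞) (iteratedDeriv n f) := by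
  rw [iteratedDeriv_eq_iterate]; exact h.iterate_deriv n

lemma smooth_deriv {f : ℝ → ℝ} (h : ContDiff ℝ (⊤:ℕ∞) f) :
    ContDiff ℝ (⊤:ℕ∞) (deriv f) := by
  simpa [iteratedDeriv_one] using smooth_iter h 1

lemma diffAt_iter {f : ℝ → ℝ} (h : ContDiff ℝ (⊤:ℕ∞) f) (n : ℕ) (x : ℝ) :
    DifferentiableAt ℝ (iteratedDeriv n f) x :=
  ((smooth_iter h n).differentiable (by simp)).differentiableAt

/-- monomial `(y - x₀)^n / n!` -/
noncomputable def pmon (x₀ : ℝ) (n : ℕ) : ℝ → ℝ := fun y => (y - x₀)^n / n.factorial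

lemma pmon_contDiff (x₀ : ℝ) (n : ℕ) {N : WithTop ℕ∞} : ContDiff ℝ N (pmon x₀ n) :=
  ((contDiff_id.sub contDiff_const).pow n).div_const _

lemma deriv_pmon_succ (x₀ : ℝ) (n : ℕ) : deriv (pmon x₀ (n+1)) = pmon x₀ n := by
  funext y
  have h1 : HasDerivAt (fun y : ℝ => (y - x₀)^(n+1)) ((n+1) * (y - x₀)^n * 1) y :=
    (((hasDerivAt_id y).sub_const x₀).pow (n+1)).congr_deriv (by simp [id])
  have h2 : HasDerivAt (pmon x₀ (n+1)) (((n+1) * (y - x₀)^n * 1) / (n+1).factorial) y :=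
    h1.div_const _
  rw [h2.deriv]
  unfold pmon
  rw [Nat.factorial_succ]
  have hn : (n.factorial : ℝ) ≠ 0 := by exact_mod_cast n.factorial_ne_zero
  field_simp
  push_cast
  ring

lemma pmon_zero_eq (x₀ : ℝ) : pmon x₀ 0 = fun _ => (1:ℝ) := by
  funext y; simp [pmon]

lemma deriv_pmon_zero (x₀ : ℝ) : deriv (pmon x₀ 0) = fun _ => (0:ℝ) := by
  rw [pmon_zero_eq]; funext y; simp

lemma iteratedDeriv_pmon (x₀ : ℝ) : ∀ i n : ℕ, i ≤ n →
    iteratedDeriv i (pmon x₀ n) = pmon x₀ (n - i)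
  | 0, n, _ => by simp [iteratedDeriv_zero]
  | (i+1), 0, h => by omega
  | (i+1), (n+1), h => by
      rw [iteratedDeriv_succ', deriv_pmon_succ,
        iteratedDeriv_pmon x₀ i n (by omega)]
      simp only [Nat.succ_sub_succ]

lemma iteratedDeriv_pmon_gt (x₀ : ℝ) (i n : ℕ) (h : n < i) :
    iteratedDeriv i (pmon x₀ n) = fun _ => (0:ℝ) := by
  obtain ⟨j, rfl⟩ : ∃ j, i = (n+1) + j := ⟨i - (n+1), by omega⟩
  induction j with
  | zero =>
      rw [iteratedDeriv_succ, iteratedDeriv_pmon x₀ n n le_rfl]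
      simpa using deriv_pmon_zero x₀
  | succ j ih =>
      rw [show n + 1 + (j+1) = (n+1+j) + 1 from by omega, iteratedDeriv_succ,
        ih (by omega)]
      funext y; simp

lemma pmon_self (x₀ : ℝ) (n : ℕ) : pmon x₀ n x₀ = if n = 0 then 1 else 0 := by
  cases n <;> simp [pmon]

lemma iteratedDeriv_pmon_self (x₀ : ℝ) (i n : ℕ) :
    iteratedDeriv i (pmon x₀ n) x₀ = if i = n then 1 else 0 := by
  rcases le_or_gt i n with h | h
  · rw [iteratedDeriv_pmon x₀ i n h, pmon_self]
    by_cases hin : i = n <;> simp [hin, Nat.sub_eq_zero_iff_le] <;> omega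
  · rw [iteratedDeriv_pmon_gt x₀ i n h, if_neg (by omega)]

/-- Leibniz rule for iterated derivatives. -/
lemma iteratedDeriv_mul_aux {f g : ℝ → ℝ} (hf : ContDiff ℝ (⊤:ℕ∞) f)
    (hg : ContDiff ℝ (⊤:ℕ∞) g) (n : ℕ) :
    iteratedDeriv n (fun x => f x * g x)
      = fun x => ∑ j ∈ range (n+1),
          (n.choose j : ℝ) * iteratedDeriv j f x * iteratedDeriv (n-j) g x := by
  induction n with
  | zero => simp [iteratedDeriv_zero]
  | succ n ih =>
    rw [iteratedDeriv_succ, ih]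
    funext x
    rw [deriv_fun_sum (fun j _ => by
      exact (((diffAt_iter hf j x).const_mul _).mul (diffAt_iter hg (n-j) x)))]
    have hderiv : ∀ j ∈ range (n+1),
        deriv (fun y => (n.choose j : ℝ) * iteratedDeriv j f y * iteratedDeriv (n-j) g y) x
        = (n.choose j : ℝ) * iteratedDeriv (j+1) f x * iteratedDeriv (n-j) g x
          + (n.choose j : ℝ) * iteratedDeriv j f x * iteratedDeriv (n+1-j) g x := by
      intro j hj
      rw [deriv_fun_mul ((diffAt_iter hf j x).const_mul _) (diffAt_iter hg (n-j) x),
        deriv_const_mul _ (diffAt_iter hf j x)]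
      rw [show n + 1 - j = (n - j) + 1 from by
        simp at hj; omega]
      rw [iteratedDeriv_succ, iteratedDeriv_succ]
    rw [Finset.sum_congr rfl hderiv, Finset.sum_add_distrib]
    -- A + B = T
    have hT : ∑ j ∈ range (n+2), (((n+1).choose j : ℝ)) * iteratedDeriv j f x * iteratedDeriv (n+1-j) g x
        = (∑ j ∈ range (n+1), ((n.choose j : ℝ)) * iteratedDeriv (j+1) f x * iteratedDeriv (n-j) g x)
          + (∑ j ∈ range (n+1), ((n.choose (j+1) : ℝ)) * iteratedDeriv (j+1) f x * iteratedDeriv (n-j) g x)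
          + iteratedDeriv 0 f x * iteratedDeriv (n+1) g x := by
      rw [Finset.sum_range_succ']
      simp only [Nat.choose_succ_succ, Nat.cast_add, Nat.succ_sub_succ, add_mul]
      rw [Finset.sum_add_distrib]
      simp [Nat.choose_zero_right]
    rw [hT]
    rw [Finset.sum_range_succ
      (f := fun j => ((n.choose (j+1):ℝ)) * iteratedDeriv (j+1) f x * iteratedDeriv (n-j) g x)]
    rw [Finset.sum_range_succ'
      (f := fun j => ((n.choose j:ℝ)) * iteratedDeriv j f x * iteratedDeriv (n+1-j) g x)]
    simp only [Nat.succ_sub_succ, Nat.choose_succ_self, Nat.cast_zero, zero_mul,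
      Nat.choose_zero_right, Nat.cast_one, one_mul, Nat.sub_zero, add_zero]
    ring

lemma iteratedDeriv_cmul (c : ℝ) (f : ℝ → ℝ) (i : ℕ) :
    iteratedDeriv i (fun y => c * f y) = fun y => c * iteratedDeriv i f y := by
  induction i with
  | zero => simp [iteratedDeriv_zero]
  | succ i ih =>
      rw [iteratedDeriv_succ, ih]
      funext y
      rw [deriv_const_mul_field, iteratedDeriv_succ]

lemma iteratedDeriv_add' {f g : ℝ → ℝ} (hf : ContDiff ℝ (⊤:ℕ∞) f)
    (hg : ContDiff ℝ (⊤:ℕ∞) g) (n : ℕ) (x : ℝ) :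
    iteratedDeriv n (fun y => f y + g y) x = iteratedDeriv n f x + iteratedDeriv n g x := by
  have : (fun y => f y + g y) = f + g := rfl
  rw [this, ← iteratedDerivWithin_univ, ← iteratedDerivWithin_univ, ← iteratedDerivWithin_univ]
  exact iteratedDerivWithin_add (Set.mem_univ x) uniqueDiffOn_univ
    (hf.contDiffWithinAt.of_le (by exact_mod_cast le_top))
    (hg.contDiffWithinAt.of_le (by exact_mod_cast le_top))

/-- Key evaluation: the `i`-th derivative of `g·pmon x₀ m` at `x₀`. -/
lemma iteratedDeriv_mul_pmon {g : ℝ → ℝ} (hg : ContDiff ℝ (⊤:ℕ∞) g) (x₀ : ℝ) (i m : ℕ) :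
    iteratedDeriv i (fun y => g y * pmon x₀ m y) x₀
      = if m ≤ i then (i.choose m : ℝ) * iteratedDeriv (i-m) g x₀ else 0 := by
  rw [show (fun y => g y * pmon x₀ m y) = fun y => g y * pmon x₀ m y from rfl,
    iteratedDeriv_mul_aux hg (pmon_contDiff x₀ m) i]
  beta_reduce
  have hterm : ∀ j ∈ range (i+1),
      (i.choose j : ℝ) * iteratedDeriv j g x₀ * iteratedDeriv (i-j) (pmon x₀ m) x₀
      = if j = i - m ∧ m ≤ i then (i.choose m : ℝ) * iteratedDeriv (i-m) g x₀ else 0 := by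
    intro j hj
    simp only [Finset.mem_range] at hj
    rw [iteratedDeriv_pmon_self]
    by_cases hc : i - j = m ∧ m ≤ i
    · obtain ⟨h1, h2⟩ := hc
      have hji : j = i - m := by omega
      rw [if_pos h1, if_pos ⟨hji, h2⟩, hji, Nat.choose_symm h2, mul_one]
    · have h1 : i - j ≠ m := fun h1 => hc ⟨h1, by omega⟩
      rw [if_neg h1, mul_zero, if_neg (by rintro ⟨rfl, h2⟩; exact h1 (by omega))]
  rw [Finset.sum_congr rfl hterm]
  by_cases hmi : m ≤ i
  · have : ∀ j ∈ range (i+1),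
        (if j = i - m ∧ m ≤ i then (i.choose m : ℝ) * iteratedDeriv (i-m) g x₀ else 0)
        = if j = i - m then (i.choose m : ℝ) * iteratedDeriv (i-m) g x₀ else 0 := by
      intro j _; simp [hmi]
    rw [Finset.sum_congr rfl this, Finset.sum_ite_eq' (range (i+1)) (i-m),
      if_pos (by simp only [Finset.mem_range]; omega), if_pos hmi]
  · rw [if_neg hmi]
    apply Finset.sum_eq_zero
    intro j hj
    rw [if_neg (by tauto)]

lemma diffAt_smooth {f : ℝ → ℝ} (h : ContDiff ℝ (⊤:ℕ∞) f) (x : ℝ) :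
    DifferentiableAt ℝ f x :=
  (h.differentiable (by simp)).differentiableAt

lemma iter_lie_pmon {X : ℝ → ℝ} (hX : ContDiff ℝ (⊤:ℕ∞) X) (lam x : ℝ) (n i : ℕ) :
    iteratedDeriv i (lieDeriv lam X (pmon x (n+1))) x
      = (if n ≤ i then (i.choose n : ℝ) * iteratedDeriv (i-n) X x else 0)
        + lam * (if n+1 ≤ i then (i.choose (n+1) : ℝ) * iteratedDeriv (i-(n+1)) (deriv X) x else 0) := by
  have hrw : lieDeriv lam X (pmon x (n+1))
      = fun y => X y * pmon x n y + lam * (deriv X y * pmon x (n+1) y) := by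
    funext y
    simp only [lieDeriv, deriv_pmon_succ]
    ring
  rw [hrw, iteratedDeriv_add' (hX.mul (pmon_contDiff x n))
      (contDiff_const.mul ((smooth_deriv hX).mul (pmon_contDiff x (n+1)))) i x,
    iteratedDeriv_cmul, iteratedDeriv_mul_pmon hX x i n]
  beta_reduce
  rw [iteratedDeriv_mul_pmon (smooth_deriv hX) x i (n+1)]

lemma key_claim (k n' : ℕ) (hnk : n' + 1 ≤ k) (X : ℝ → ℝ) (a b : ℕ → ℝ → ℝ)
    (hX : ContDiff ℝ (⊤:ℕ∞) X) (ha : ∀ i, ContDiff ℝ (⊤:ℕ∞) (a i))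
    (hb : ∀ φ : ℝ → ℝ, ContDiff ℝ (⊤ : ℕ∞) φ →
      (fun x => ∑ i ∈ Finset.range (k+1), b i x * iteratedDeriv i φ x)
        = fun x =>
            lieDeriv ((1 + (k : ℝ))/2) X
              (fun y => ∑ i ∈ Finset.range (k+1), a i y * iteratedDeriv i φ y) x
              - ∑ i ∈ Finset.range (k+1),
                  a i x * iteratedDeriv i (lieDeriv ((1 - (k : ℝ))/2) X φ) x)
    (x : ℝ) :
    b (n'+1) x = X x * (deriv (a (n'+1)) x + a n' x)
        + (1+(k:ℝ))/2 * deriv X x * a (n'+1) x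
        - ∑ i ∈ Finset.range (k+1), a i x *
            ((if n' ≤ i then (i.choose n' : ℝ) * iteratedDeriv (i-n') X x else 0)
              + (1-(k:ℝ))/2 * (if n'+1 ≤ i then (i.choose (n'+1) : ℝ)
                  * iteratedDeriv (i-(n'+1)) (deriv X) x else 0)) := by
  have h := congrFun (hb (pmon x (n'+1)) (pmon_contDiff x (n'+1))) x
  beta_reduce at h
  have hLHS : ∑ i ∈ range (k+1), b i x * iteratedDeriv i (pmon x (n'+1)) x = b (n'+1) x := by
    have hterm : ∀ i ∈ range (k+1), b i x * iteratedDeriv i (pmon x (n'+1)) x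
        = if i = n'+1 then b i x else 0 := by
      intro i _
      rw [iteratedDeriv_pmon_self]
      by_cases hin : i = n'+1 <;> simp [hin]
    rw [Finset.sum_congr rfl hterm, Finset.sum_ite_eq' (range (k+1)) (n'+1),
      if_pos (by simp only [Finset.mem_range]; omega)]
  rw [hLHS] at h
  have hFx : ∑ i ∈ range (k+1), a i x * iteratedDeriv i (pmon x (n'+1)) x = a (n'+1) x := by
    have hterm : ∀ i ∈ range (k+1), a i x * iteratedDeriv i (pmon x (n'+1)) x
        = if i = n'+1 then a i x else 0 := by
      intro i _
      rw [iteratedDeriv_pmon_self]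
      by_cases hin : i = n'+1 <;> simp [hin]
    rw [Finset.sum_congr rfl hterm, Finset.sum_ite_eq' (range (k+1)) (n'+1),
      if_pos (by simp only [Finset.mem_range]; omega)]
  have hdF : deriv (fun y => ∑ i ∈ range (k+1), a i y * iteratedDeriv i (pmon x (n'+1)) y) x
      = deriv (a (n'+1)) x + a n' x := by
    rw [deriv_fun_sum (A := fun i y => a i y * iteratedDeriv i (pmon x (n'+1)) y) (fun i _ => (diffAt_smooth (ha i) x).mul
      (diffAt_iter (pmon_contDiff x (n'+1)) i x))]
    have hterm : ∀ i ∈ range (k+1),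
        deriv (fun y => a i y * iteratedDeriv i (pmon x (n'+1)) y) x
        = (if i = n'+1 then deriv (a i) x else 0) + (if i = n' then a i x else 0) := by
      intro i _
      rw [deriv_fun_mul (diffAt_smooth (ha i) x) (diffAt_iter (pmon_contDiff x (n'+1)) i x),
        show deriv (iteratedDeriv i (pmon x (n'+1))) x
            = iteratedDeriv (i+1) (pmon x (n'+1)) x from by rw [← iteratedDeriv_succ],
        iteratedDeriv_pmon_self, iteratedDeriv_pmon_self]
      by_cases h1 : i = n'+1 <;> by_cases h2 : i = n'
      · omega
      · simp [h1, h2]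
      · simp [h1, h2]
      · have h3 : ¬ (i + 1 = n' + 1) := by omega
        simp [h1, h2, h3]
    rw [Finset.sum_congr rfl hterm, Finset.sum_add_distrib,
      Finset.sum_ite_eq' (range (k+1)) (n'+1), Finset.sum_ite_eq' (range (k+1)) n',
      if_pos (by simp only [Finset.mem_range]; omega),
      if_pos (by simp only [Finset.mem_range]; omega)]
  have hS : ∀ i ∈ range (k+1),
      a i x * iteratedDeriv i (lieDeriv ((1 - (k : ℝ))/2) X (pmon x (n'+1))) x
      = a i x * ((if n' ≤ i then (i.choose n' : ℝ) * iteratedDeriv (i-n') X x else 0)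
          + (1-(k:ℝ))/2 * (if n'+1 ≤ i then (i.choose (n'+1) : ℝ)
              * iteratedDeriv (i-(n'+1)) (deriv X) x else 0)) := by
    intro i _
    rw [iter_lie_pmon hX ((1 - (k : ℝ))/2) x n' i]
  rw [Finset.sum_congr rfl hS] at h
  rw [h]
  simp only [lieDeriv]
  rw [hdF, hFx]

lemma key_claim0 (k : ℕ) (X : ℝ → ℝ) (a b : ℕ → ℝ → ℝ)
    (hX : ContDiff ℝ (⊤:ℕ∞) X) (ha : ∀ i, ContDiff ℝ (⊤:ℕ∞) (a i))
    (hb : ∀ φ : ℝ → ℝ, ContDiff ℝ (⊤ : ℕ∞) φ →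
      (fun x => ∑ i ∈ Finset.range (k+1), b i x * iteratedDeriv i φ x)
        = fun x =>
            lieDeriv ((1 + (k : ℝ))/2) X
              (fun y => ∑ i ∈ Finset.range (k+1), a i y * iteratedDeriv i φ y) x
              - ∑ i ∈ Finset.range (k+1),
                  a i x * iteratedDeriv i (lieDeriv ((1 - (k : ℝ))/2) X φ) x)
    (x : ℝ) :
    b 0 x = X x * deriv (a 0) x + (1+(k:ℝ))/2 * deriv X x * a 0 x
        - ∑ i ∈ Finset.range (k+1), a i x *
            ((1-(k:ℝ))/2 * iteratedDeriv i (deriv X) x) := by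
  have h := congrFun (hb (pmon x 0) (pmon_contDiff x 0)) x
  beta_reduce at h
  have hLHS : ∑ i ∈ range (k+1), b i x * iteratedDeriv i (pmon x 0) x = b 0 x := by
    have hterm : ∀ i ∈ range (k+1), b i x * iteratedDeriv i (pmon x 0) x
        = if i = 0 then b i x else 0 := by
      intro i _
      rw [iteratedDeriv_pmon_self]
      by_cases hin : i = 0 <;> simp [hin]
    rw [Finset.sum_congr rfl hterm, Finset.sum_ite_eq' (range (k+1)) 0,
      if_pos (by simp only [Finset.mem_range]; omega)]
  rw [hLHS] at h
  have hFx : ∑ i ∈ range (k+1), a i x * iteratedDeriv i (pmon x 0) x = a 0 x := by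
    have hterm : ∀ i ∈ range (k+1), a i x * iteratedDeriv i (pmon x 0) x
        = if i = 0 then a i x else 0 := by
      intro i _
      rw [iteratedDeriv_pmon_self]
      by_cases hin : i = 0 <;> simp [hin]
    rw [Finset.sum_congr rfl hterm, Finset.sum_ite_eq' (range (k+1)) 0,
      if_pos (by simp only [Finset.mem_range]; omega)]
  have hdF : deriv (fun y => ∑ i ∈ range (k+1), a i y * iteratedDeriv i (pmon x 0) y) x
      = deriv (a 0) x := by
    rw [deriv_fun_sum (A := fun i y => a i y * iteratedDeriv i (pmon x 0) y) (fun i _ => (diffAt_smooth (ha i) x).mul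
      (diffAt_iter (pmon_contDiff x 0) i x))]
    have hterm : ∀ i ∈ range (k+1),
        deriv (fun y => a i y * iteratedDeriv i (pmon x 0) y) x
        = if i = 0 then deriv (a i) x else 0 := by
      intro i _
      rw [deriv_fun_mul (diffAt_smooth (ha i) x) (diffAt_iter (pmon_contDiff x 0) i x),
        show deriv (iteratedDeriv i (pmon x 0)) x
            = iteratedDeriv (i+1) (pmon x 0) x from by rw [← iteratedDeriv_succ],
        iteratedDeriv_pmon_self, iteratedDeriv_pmon_self]
      by_cases h1 : i = 0 <;> simp [h1]
    rw [Finset.sum_congr rfl hterm, Finset.sum_ite_eq' (range (k+1)) 0,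
      if_pos (by simp only [Finset.mem_range]; omega)]
  have hlie : lieDeriv ((1 - (k : ℝ))/2) X (pmon x 0)
      = fun y => ((1 - (k : ℝ))/2) * deriv X y := by
    funext y
    have h0 : deriv (pmon x 0) y = 0 := by rw [deriv_pmon_zero]
    have h1 : pmon x 0 y = 1 := by simp [pmon]
    simp [lieDeriv, h0, h1]
  have hS : ∀ i ∈ range (k+1),
      a i x * iteratedDeriv i (lieDeriv ((1 - (k : ℝ))/2) X (pmon x 0)) x
      = a i x * ((1-(k:ℝ))/2 * iteratedDeriv i (deriv X) x) := by
    intro i _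
    rw [hlie, iteratedDeriv_cmul]
  rw [Finset.sum_congr rfl hS] at h
  rw [h]
  simp only [lieDeriv]
  rw [hdF, hFx]

/-- For the special weights `λ = (1−k)/2`, `μ = (1+k)/2`, the two maps
`A ↦ a_k'·dx` and `A ↦ a_{k−1}·dx` are equivariant projections onto 1-forms. -/
theorem two_projections_equivariant (k : ℕ) (hk : 1 ≤ k) (X : ℝ → ℝ) (a b : ℕ → ℝ → ℝ)
    (hX : ContDiff ℝ (⊤ : ℕ∞) X)
    (ha : ∀ i, ContDiff ℝ (⊤ : ℕ∞) (a i)) (hbsmooth : ∀ i, ContDiff ℝ (⊤ : ℕ∞) (b i))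
    (hb : ∀ φ : ℝ → ℝ, ContDiff ℝ (⊤ : ℕ∞) φ →
      (fun x => ∑ i ∈ Finset.range (k+1), b i x * iteratedDeriv i φ x)
        = fun x =>
            lieDeriv ((1 + (k : ℝ))/2) X
              (fun y => ∑ i ∈ Finset.range (k+1), a i y * iteratedDeriv i φ y) x
              - ∑ i ∈ Finset.range (k+1),
                  a i x * iteratedDeriv i (lieDeriv ((1 - (k : ℝ))/2) X φ) x) :
    deriv (b k) = lieDeriv 1 X (deriv (a k)) ∧ b (k-1) = lieDeriv 1 X (a (k-1)) := by
  have hX' : ContDiff ℝ (⊤:ℕ∞) X := hX.of_le (by simp)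
  have ha' : ∀ i, ContDiff ℝ (⊤:ℕ∞) (a i) := fun i => (ha i).of_le (by simp)
  obtain ⟨m, rfl⟩ : ∃ m, k = m + 1 := ⟨k - 1, by omega⟩
  constructor
  · -- first projection
    have claim1 : ∀ x, b (m+1) x = X x * deriv (a (m+1)) x := by
      intro x
      have h := key_claim (m+1) m le_rfl X a b hX' ha' hb x
      rw [Finset.sum_range_succ, Finset.sum_range_succ] at h
      rw [Finset.sum_eq_zero (fun i hi => by
        simp only [Finset.mem_range] at hi
        rw [if_neg (by omega), if_neg (by omega)]
        ring)] at h
      rw [if_pos (le_refl m), if_neg (show ¬ m+1 ≤ m by omega),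
        if_pos (show m ≤ m+1 by omega), if_pos (le_refl (m+1))] at h
      simp only [Nat.sub_self, Nat.add_sub_cancel_left, Nat.choose_self,
        Nat.choose_succ_self_right, iteratedDeriv_zero, iteratedDeriv_one,
        Nat.cast_one, one_mul] at h
      rw [h]
      push_cast
      ring
    rw [funext claim1]
    funext x
    have hd : deriv (fun x => X x * deriv (a (m+1)) x) x
        = deriv X x * deriv (a (m+1)) x + X x * deriv (deriv (a (m+1))) x :=
      deriv_fun_mul (diffAt_smooth hX' x) (diffAt_smooth (smooth_deriv (ha' (m+1))) x)
    rw [hd]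
    simp only [lieDeriv]
    ring
  · -- second projection
    simp only [Nat.add_sub_cancel]
    funext x
    rcases Nat.eq_zero_or_eq_succ_pred m with hm | hm
    · subst hm
      have h := key_claim0 1 X a b hX' ha' (by exact_mod_cast hb) x
      rw [Finset.sum_eq_zero (fun i _ => by norm_num)] at h
      rw [h]
      simp only [lieDeriv]
      norm_num
    · obtain ⟨j, rfl⟩ : ∃ j, m = j + 1 := ⟨m - 1, hm⟩
      have h := key_claim (j+2) j (by omega) X a b hX' ha'
        (by exact_mod_cast hb) x
      rw [Finset.sum_range_succ, Finset.sum_range_succ, Finset.sum_range_succ] at h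
      rw [Finset.sum_eq_zero (fun i hi => by
        simp only [Finset.mem_range] at hi
        rw [if_neg (by omega), if_neg (by omega)]
        ring)] at h
      rw [if_pos (le_refl j), if_neg (show ¬ j+1 ≤ j by omega),
        if_pos (show j ≤ j+1 by omega), if_pos (le_refl (j+1)),
        if_pos (show j ≤ j+2 by omega), if_pos (show j+1 ≤ j+2 by omega)] at h
      have e1 : j + 1 - j = 1 := by omega
      have e2 : j + 2 - j = 2 := by omega
      have e3 : j + 2 - (j+1) = 1 := by omega
      rw [e1, e2, e3] at h
      have echoose : ((j+2).choose j : ℝ) = ((j:ℝ)+2) * ((j:ℝ)+1) / 2 := by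
        have h1 : (j+2).choose j = (j+2).choose 2 := by
          have := Nat.choose_symm (show 2 ≤ j+2 by omega)
          simpa using this
        rw [h1, Nat.cast_choose_two]
        push_cast
        ring
      have e4 : iteratedDeriv 2 X x = iteratedDeriv 1 (deriv X) x := by
        rw [show (2:ℕ) = 1 + 1 from rfl, iteratedDeriv_succ']
      rw [echoose, e4] at h
      simp only [Nat.sub_self, Nat.choose_self, Nat.choose_succ_self_right,
        iteratedDeriv_zero, iteratedDeriv_one, Nat.cast_one, one_mul] at h
      rw [h]
      simp only [lieDeriv]
      push_cast
      ring
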